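/- arXiv:0904.1458 — 2 statements merged into one kernel-verified Lean document; each statement's English description precedes it below -/
import Mathlib

section
/- Let X be a compact metrizable space, K, L disjoint compact subsets of X, and suppose Y is strongly contractible at y ∈ Y. Then there exists a homotopy sₜ : C(X,Y) → C(X,Y) (compact-open topology), t ∈ [0,1], such that for every f ∈ C(X,Y): s₀(f) = f; s₁(f)(L) = {y}; sₜ(f)|K = f|K for all t; and if f(x) = y then sₜ(f)(x) = y for all t. -/
/-!
Contract the value `f x` along the contraction `H` of `Y`, but only for the time `λ x * t`, where
`λ : X → [0,1]` is an Urysohn function vanishing on `K` and equal to `1` on `L`. Points of `K` never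
move, points of `L` reach `y` at `t = 1`, and `y` stays fixed because `H` fixes it at all times.
-/

/-- A space `Y` is strongly contractible at `y` if `Y` contracts to `y` in
itself keeping `y` fixed throughout the homotopy. -/
def StronglyContractibleAt {Y : Type*} [TopologicalSpace Y] (y : Y) : Prop :=
  ∃ H : Y × unitInterval → Y, Continuous H ∧ (∀ z, H (z, 0) = z) ∧
    (∀ z, H (z, 1) = y) ∧ ∀ t, H (y, t) = y

open unitInterval

theorem exists_continuousMap_unitInterval_eqOn_zero_one {X : Type*} [TopologicalSpace X]
    [NormalSpace X] {s t : Set X} (hs : IsClosed s) (ht : IsClosed t) (hst : Disjoint s t) :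
    ∃ μ : C(X, I), Set.EqOn μ 0 s ∧ Set.EqOn μ 1 t := by
  obtain ⟨f, hf0, hf1, hfI⟩ := exists_continuous_zero_one_of_isClosed hs ht hst
  exact ⟨⟨fun x ↦ ⟨f x, hfI x⟩, by fun_prop⟩, fun x hx ↦ Subtype.ext (hf0 hx),
    fun x hx ↦ Subtype.ext (hf1 hx)⟩

namespace ContinuousMap

variable {X Y : Type*} [TopologicalSpace X] [TopologicalSpace Y] [LocallyCompactSpace X]

def dampedHomotopy (H : C(Y × I, Y)) (μ : C(X, I)) : C(C(X, Y) × I, C(X, Y)) :=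
  curry ⟨fun p ↦ H (p.1.1 p.2, μ p.2 * p.1.2), by fun_prop⟩

@[simp]
theorem dampedHomotopy_apply (H : C(Y × I, Y)) (μ : C(X, I)) (f : C(X, Y)) (t : I) (x : X) :
    dampedHomotopy H μ (f, t) x = H (f x, μ x * t) :=
  rfl

end ContinuousMap

/-- for X compact metrizable, K, L disjoint compact subsets and Y
strongly contractible at y, there is a homotopy `sₜ` of `C(X,Y)` (compact-open
topology) with `s₀(f) = f`, `s₁(f)(L) = {y}`, `sₜ(f)|K = f|K` for all `t`, and
`sₜ(f)(x) = y` whenever `f(x) = y`. -/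
theorem stmt15 {X : Type*} [TopologicalSpace X] [CompactSpace X]
    [TopologicalSpace.MetrizableSpace X]
    {Y : Type*} [TopologicalSpace Y] {y : Y} (hY : StronglyContractibleAt y)
    (K L : Set X) (hK : IsCompact K) (hL : IsCompact L) (hKL : Disjoint K L) :
    ∃ S : C(C(X, Y) × unitInterval, C(X, Y)),
      (∀ f : C(X, Y), S (f, 0) = f) ∧
      (∀ f : C(X, Y), ∀ l ∈ L, S (f, 1) l = y) ∧
      (∀ (f : C(X, Y)) (t : unitInterval), ∀ k ∈ K, S (f, t) k = f k) ∧
      (∀ (f : C(X, Y)) (t : unitInterval) (x : X), f x = y → S (f, t) x = y) := by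
  obtain ⟨H, hH, hH0, hH1, hHy⟩ := hY
  obtain ⟨μ, hμK, hμL⟩ :=
    exists_continuousMap_unitInterval_eqOn_zero_one hK.isClosed hL.isClosed hKL
  refine ⟨ContinuousMap.dampedHomotopy ⟨H, hH⟩ μ, fun f ↦ ?_, fun f l hl ↦ ?_, fun f t k hk ↦ ?_,
    fun f t x hx ↦ ?_⟩
  · ext x
    simp [hH0]
  · simp [hμL hl, hH1]
  · simp [hμK hk, hH0]
  · simp [hx, hHy]
end

section
/- Let X be a locally compact σ-compact Hausdorff space, G a topological group, and ℒ = (Lᵢ)ᵢ∈ℕ a discrete family of compact subsets of X with union L. Then the map λ_ℒ : ⊡ᵢ 𝒢(Lᵢ) → 𝒢_c(L), sending a sequence (fᵢ) (all but finitely many equal to the constant ê) to the map that agrees with fᵢ on Lᵢ and equals e off L, is a well-defined bijective group homomorphism, where 𝒢(N) = {f ∈ C(X,G) : supp(f) ⊆ N} and 𝒢_c(L) = {f ∈ C_c(X,G) : supp(f) ⊆ L}. -/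
open Function Set

variable {X G : Type*} [TopologicalSpace X] [TopologicalSpace G] [Group G]
  [IsTopologicalGroup G]

/-- The subgroup `𝒢(N) = {f ∈ C(X,G) : supp(f) ⊆ N}` of maps with support
(closure of `{x | f x ≠ e}`) contained in `N`. -/
def suppIn (X : Type*) (G : Type*) [TopologicalSpace X] [TopologicalSpace G]
    [Group G] [IsTopologicalGroup G] (N : Set X) : Subgroup C(X, G) where
  carrier := {f : C(X, G) | mulTSupport ⇑f ⊆ N}
  one_mem' := by
    simp only [Set.mem_setOf_eq, ContinuousMap.coe_one]
    rw [mulTSupport]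
    simp [Function.mulSupport_one]
  mul_mem' := by
    intro a b ha hb
    simp only [Set.mem_setOf_eq, ContinuousMap.coe_mul] at *
    refine (closure_mono (Function.mulSupport_mul ⇑a ⇑b)).trans ?_
    rw [closure_union]
    exact Set.union_subset ha hb
  inv_mem' := by
    intro a ha
    simp only [Set.mem_setOf_eq, ContinuousMap.coe_inv] at *
    have : Function.mulSupport (⇑a)⁻¹ = Function.mulSupport ⇑a := by
      ext x; simp [Function.mulSupport, Pi.inv_apply]
    rwa [mulTSupport, this, ← mulTSupport]

/-- The small box product of a tower of subgroups: sequences that are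
eventually the identity. -/
abbrev SmallBox {H : Type*} [Group H] (K : ℕ → Subgroup H) : Type _ :=
  {x : ∀ i, K i // ∃ N, ∀ i ≥ N, x i = 1}

/-- Coordinatewise multiplication on the small box product. -/
instance {H : Type*} [Group H] (K : ℕ → Subgroup H) : Mul (SmallBox K) :=
  ⟨fun x y => ⟨x.1 * y.1, by
    obtain ⟨N, hN⟩ := x.2
    obtain ⟨M, hM⟩ := y.2
    exact ⟨max N M, fun i hi => by
      have h1 := hN i (le_trans (le_max_left _ _) hi)
      have h2 := hM i (le_trans (le_max_right _ _) hi)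
      simp [Pi.mul_apply, h1, h2]⟩⟩⟩

/-! A sequence `(fᵢ)` with `supp fᵢ ⊆ Lᵢ` is glued into the function that is `fᵢ` on `Lᵢ` and `e`
off `⋃ Lᵢ`. Since the `Lᵢ` are disjoint, restricting to the `Lᵢ` undoes the gluing, and gluing
the restrictions of a map supported in `⋃ Lᵢ` gives it back, so gluing is a bijection. Discreteness
makes the glued function agree near each point with a single `fᵢ`, hence continuous; and since a
discrete family is locally finite, a compact support meets only finitely many `Lᵢ`, which is why
the inverse lands in the small box product. -/

def IsDiscreteFamily {α ι : Type*} [TopologicalSpace α] (L : ι → Set α) : Prop :=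
  ∀ x : α, ∃ U ∈ nhds x, {i : ι | (U ∩ L i).Nonempty}.Subsingleton

section Glue

variable {α ι M : Type*} {L : ι → Set α}

open scoped Classical in
/-- On a pairwise disjoint family, `glue L g` is `g i` on `L i` and `1` off `⋃ i, L i`. -/
noncomputable def glue [One M] (L : ι → Set α) (g : ι → α → M) (x : α) : M :=
  if h : ∃ i, x ∈ L i then g h.choose x else 1

theorem glue_apply_of_mem [One M] (hL : Pairwise (Disjoint on L)) (g : ι → α → M) {i : ι}
    {x : α} (hx : x ∈ L i) : glue L g x = g i x := by
  have h : ∃ i, x ∈ L i := ⟨i, hx⟩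
  rw [glue, dif_pos h, hL.eq (not_disjoint_iff.2 ⟨x, h.choose_spec, hx⟩)]

theorem glue_apply_of_notMem [One M] (g : ι → α → M) {x : α} (hx : x ∉ ⋃ i, L i) :
    glue L g x = 1 :=
  dif_neg (by simpa using hx)

theorem glue_mul [MulOneClass M] (g h : ι → α → M) : glue L (g * h) = glue L g * glue L h := by
  ext x
  by_cases h : ∃ i, x ∈ L i <;> simp [glue, h]

theorem mulSupport_glue_subset [One M] (g : ι → α → M) :
    mulSupport (glue L g) ⊆ ⋃ i, mulSupport (g i) := by
  intro x hx
  by_cases h : ∃ i, x ∈ L i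
  · exact mem_iUnion.2 ⟨h.choose, by simpa [glue, h] using hx⟩
  · exact absurd (glue_apply_of_notMem g (by simpa using h)) hx

theorem mulIndicator_glue [One M] (hL : Pairwise (Disjoint on L)) {g : ι → α → M} {i : ι}
    (hg : mulSupport (g i) ⊆ L i) : mulIndicator (L i) (glue L g) = g i := by
  ext x
  by_cases hx : x ∈ L i
  · rw [mulIndicator_of_mem hx, glue_apply_of_mem hL g hx]
  · rw [mulIndicator_of_notMem hx, notMem_mulSupport.1 fun h => hx (hg h)]

theorem glue_mulIndicator [One M] (hL : Pairwise (Disjoint on L)) {f : α → M}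
    (hf : mulSupport f ⊆ ⋃ i, L i) : glue L (fun i => mulIndicator (L i) f) = f := by
  ext x
  by_cases hx : x ∈ ⋃ i, L i
  · obtain ⟨i, hi⟩ := mem_iUnion.1 hx
    rw [glue_apply_of_mem hL _ hi, mulIndicator_of_mem hi]
  · rw [glue_apply_of_notMem _ hx, notMem_mulSupport.1 fun h => hx (hf h)]

theorem glue_mulSingle [DecidableEq ι] [One M] (hL : Pairwise (Disjoint on L)) (i : ι)
    (f : α → M) : glue L (Pi.mulSingle i f) = mulIndicator (L i) f := by
  ext x
  by_cases hx : x ∈ ⋃ j, L j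
  · obtain ⟨j, hj⟩ := mem_iUnion.1 hx
    rw [glue_apply_of_mem hL _ hj]
    rcases eq_or_ne j i with rfl | hji
    · rw [Pi.mulSingle_eq_same, mulIndicator_of_mem hj]
    · rw [Pi.mulSingle_eq_of_ne hji, mulIndicator_of_notMem (disjoint_left.1 (hL hji) hj),
        Pi.one_apply]
  · rw [glue_apply_of_notMem _ hx, mulIndicator_of_notMem fun h => hx (mem_iUnion_of_mem i h)]

end Glue

namespace IsDiscreteFamily

variable {α ι M : Type*} [TopologicalSpace α] {L : ι → Set α}

theorem pairwise_disjoint (hL : IsDiscreteFamily L) : Pairwise (Disjoint on L) := by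
  intro i j hij
  refine disjoint_left.2 fun x hi hj => hij ?_
  obtain ⟨U, hU, hsub⟩ := hL x
  exact hsub ⟨x, mem_of_mem_nhds hU, hi⟩ ⟨x, mem_of_mem_nhds hU, hj⟩

theorem locallyFinite (hL : IsDiscreteFamily L) : LocallyFinite L := fun x => by
  obtain ⟨U, hU, hsub⟩ := hL x
  exact ⟨U, hU, by simpa only [inter_comm] using hsub.finite⟩

theorem continuous_glue [TopologicalSpace M] [One M] (hL : IsDiscreteFamily L)
    {g : ι → α → M} (hg : ∀ i, Continuous (g i)) (hsupp : ∀ i, mulSupport (g i) ⊆ ⋃ j, L j) :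
    Continuous (glue L g) := by
  refine continuous_iff_continuousAt.2 fun x => ?_
  obtain ⟨U, hU, hsub⟩ := hL x
  by_cases hmeet : ∃ i, (U ∩ L i).Nonempty
  · obtain ⟨i, hi⟩ := hmeet
    refine (hg i).continuousAt.congr (Filter.eventuallyEq_of_mem hU fun y hy => ?_)
    by_cases hy' : y ∈ ⋃ j, L j
    · obtain ⟨j, hj⟩ := mem_iUnion.1 hy'
      rw [hsub hi ⟨y, hy, hj⟩, glue_apply_of_mem hL.pairwise_disjoint g hj]
    · rw [glue_apply_of_notMem g hy', notMem_mulSupport.1 fun h => hy' (hsupp i h)]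
  · refine (continuousAt_const (y := (1 : M))).congr
      (Filter.eventuallyEq_of_mem hU fun y hy => (glue_apply_of_notMem g fun hy' => hmeet ?_).symm)
    obtain ⟨j, hj⟩ := mem_iUnion.1 hy'
    exact ⟨j, y, hy, hj⟩

theorem continuous_mulIndicator [TopologicalSpace M] [One M] (hL : IsDiscreteFamily L)
    {f : α → M} (hf : Continuous f) (hsupp : mulSupport f ⊆ ⋃ j, L j) (i : ι) :
    Continuous (mulIndicator (L i) f) := by
  classical
  rw [← glue_mulSingle hL.pairwise_disjoint]
  refine hL.continuous_glue (fun j => ?_) (fun j => ?_) <;> rcases eq_or_ne j i with rfl | hji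
  · simpa using hf
  · simpa [Pi.mulSingle_eq_of_ne hji] using continuous_one
  · simpa using hsupp
  · simp [Pi.mulSingle_eq_of_ne hji]

end IsDiscreteFamily

section SmallBoxGlue

variable {L : ℕ → Set X}

theorem mulSupport_subset_of_mem_suppIn {N : Set X} {f : C(X, G)} (hf : f ∈ suppIn X G N) :
    mulSupport f ⊆ N :=
  (subset_mulTSupport _).trans hf

theorem mulSupport_glue_subset_biUnion (F : SmallBox fun i => suppIn X G (L i)) {N : ℕ}
    (hN : ∀ i ≥ N, F.1 i = 1) :
    mulSupport (glue L fun i => ⇑(F.1 i : C(X, G))) ⊆ ⋃ i ∈ Finset.range N, L i := by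
  intro x hx
  obtain ⟨i, hi⟩ := mem_iUnion.1 (mulSupport_glue_subset _ hx)
  have hiN : i < N := by
    by_contra! hNi
    simp [hN i hNi] at hi
  exact mem_biUnion (Finset.mem_range.2 hiN) (mulSupport_subset_of_mem_suppIn (F.1 i).2 hi)

theorem isCompact_mulTSupport_glue [T2Space X] (hcpt : ∀ i, IsCompact (L i))
    (F : SmallBox fun i => suppIn X G (L i)) :
    IsCompact (mulTSupport (glue L fun i => ⇑(F.1 i : C(X, G)))) ∧
      mulTSupport (glue L fun i => ⇑(F.1 i : C(X, G))) ⊆ ⋃ i, L i := by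
  obtain ⟨N, hN⟩ := F.2
  have hK : IsCompact (⋃ i ∈ Finset.range N, L i) :=
    (Finset.range N).isCompact_biUnion fun i _ => hcpt i
  have hsub := closure_minimal (mulSupport_glue_subset_biUnion F hN) hK.isClosed
  exact ⟨hK.of_isClosed_subset (isClosed_mulTSupport _) hsub,
    hsub.trans (iUnion₂_subset fun i _ => subset_iUnion L i)⟩

/-- The map `λ_ℒ`. -/
noncomputable def smallBoxGlue [T2Space X] (hL : IsDiscreteFamily L)
    (hcpt : ∀ i, IsCompact (L i)) (F : SmallBox fun i => suppIn X G (L i)) :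
    {f : C(X, G) // IsCompact (mulTSupport ⇑f) ∧ mulTSupport ⇑f ⊆ ⋃ i, L i} :=
  ⟨⟨glue L fun i => F.1 i, hL.continuous_glue (fun i => (F.1 i : C(X, G)).continuous)
    fun i => (mulSupport_subset_of_mem_suppIn (F.1 i).2).trans (subset_iUnion L i)⟩,
    isCompact_mulTSupport_glue hcpt F⟩

variable [T2Space X] (hL : IsDiscreteFamily L) (hcpt : ∀ i, IsCompact (L i))

theorem smallBoxGlue_apply_of_mem (F : SmallBox fun i => suppIn X G (L i)) {i : ℕ} {x : X}
    (hx : x ∈ L i) : (smallBoxGlue hL hcpt F : C(X, G)) x = (F.1 i : C(X, G)) x :=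
  glue_apply_of_mem hL.pairwise_disjoint (fun i => ⇑(F.1 i : C(X, G))) hx

theorem smallBoxGlue_apply_of_notMem (F : SmallBox fun i => suppIn X G (L i)) {x : X}
    (hx : x ∉ ⋃ i, L i) : (smallBoxGlue hL hcpt F : C(X, G)) x = 1 :=
  glue_apply_of_notMem (fun i => ⇑(F.1 i : C(X, G))) hx

theorem mulIndicator_smallBoxGlue (F : SmallBox fun i => suppIn X G (L i)) (i : ℕ) :
    mulIndicator (L i) ⇑(smallBoxGlue hL hcpt F : C(X, G)) = ⇑(F.1 i : C(X, G)) :=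
  mulIndicator_glue (g := fun i => ⇑(F.1 i : C(X, G))) hL.pairwise_disjoint
    (mulSupport_subset_of_mem_suppIn (F.1 i).2)

theorem smallBoxGlue_injective : Function.Injective (smallBoxGlue (G := G) hL hcpt) := by
  intro F F' h
  refine Subtype.ext (funext fun i => Subtype.ext (DFunLike.coe_injective ?_))
  rw [← mulIndicator_smallBoxGlue hL hcpt F i, ← mulIndicator_smallBoxGlue hL hcpt F' i, h]

theorem smallBoxGlue_surjective : Function.Surjective (smallBoxGlue (G := G) hL hcpt) := by
  rintro ⟨f, hfc, hfL⟩
  have hsupp : mulSupport f ⊆ ⋃ i, L i := (subset_mulTSupport _).trans hfL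
  let F : ∀ i, suppIn X G (L i) := fun i =>
    ⟨⟨mulIndicator (L i) f, hL.continuous_mulIndicator f.continuous hsupp i⟩,
      closure_minimal mulSupport_mulIndicator_subset (hcpt i).isClosed⟩
  obtain ⟨N, hN⟩ := (hL.locallyFinite.finite_nonempty_inter_compact hfc).bddAbove
  have hF : ∀ i ≥ N + 1, F i = 1 := by
    refine fun i hi => Subtype.ext (DFunLike.coe_injective (mulIndicator_eq_one.2 ?_))
    refine disjoint_left.2 fun x hx hxL => ?_
    have := hN ⟨x, hxL, subset_mulTSupport _ hx⟩
    omega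
  exact ⟨⟨F, N + 1, hF⟩,
    Subtype.ext (DFunLike.coe_injective (glue_mulIndicator hL.pairwise_disjoint hsupp))⟩

theorem smallBoxGlue_mul (F F' : SmallBox fun i => suppIn X G (L i)) :
    (smallBoxGlue hL hcpt (F * F') : C(X, G)) =
      (smallBoxGlue hL hcpt F : C(X, G)) * (smallBoxGlue hL hcpt F' : C(X, G)) :=
  DFunLike.coe_injective (glue_mul (fun i => ⇑(F.1 i : C(X, G))) fun i => ⇑(F'.1 i : C(X, G)))

end SmallBoxGlue

theorem stmt17_general [T2Space X]
    (L : ℕ → Set X) (hcpt : ∀ i, IsCompact (L i))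
    (hdisc : ∀ x : X, ∃ U ∈ nhds x, {i : ℕ | (U ∩ L i).Nonempty}.Subsingleton) :
    ∃ lam : SmallBox (fun i => suppIn X G (L i)) →
        {f : C(X, G) // IsCompact (mulTSupport ⇑f) ∧ mulTSupport ⇑f ⊆ ⋃ i, L i},
      (∀ F, ∀ i, ∀ x ∈ L i, ((lam F : C(X, G)) x = ((F.1 i : C(X, G)) x))) ∧
      (∀ F, ∀ x ∉ ⋃ i, L i, (lam F : C(X, G)) x = 1) ∧
      Function.Bijective lam ∧
      (∀ F F' : SmallBox (fun i => suppIn X G (L i)),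
        ((lam (F * F') : C(X, G))) = (lam F : C(X, G)) * (lam F' : C(X, G))) :=
  ⟨smallBoxGlue hdisc hcpt, fun F _ _ => smallBoxGlue_apply_of_mem hdisc hcpt F,
    fun F _ => smallBoxGlue_apply_of_notMem hdisc hcpt F,
    ⟨smallBoxGlue_injective hdisc hcpt, smallBoxGlue_surjective hdisc hcpt⟩,
    smallBoxGlue_mul hdisc hcpt⟩

/-- for a discrete family `ℒ = (Lᵢ)` of compact subsets of a
locally compact σ-compact Hausdorff space X with union L, the map
`λ_ℒ : ⊡ᵢ 𝒢(Lᵢ) → 𝒢_c(L)`, sending `(fᵢ)` to the map agreeing with `fᵢ` on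
`Lᵢ` and equal to `e` off `L`, is a well-defined bijective group
homomorphism. -/
theorem stmt17 [T2Space X] [LocallyCompactSpace X] [SigmaCompactSpace X]
    (L : ℕ → Set X) (hcpt : ∀ i, IsCompact (L i))
    (hdisc : ∀ x : X, ∃ U ∈ nhds x, {i : ℕ | (U ∩ L i).Nonempty}.Subsingleton) :
    ∃ lam : SmallBox (fun i => suppIn X G (L i)) →
        {f : C(X, G) // IsCompact (mulTSupport ⇑f) ∧ mulTSupport ⇑f ⊆ ⋃ i, L i},
      (∀ F, ∀ i, ∀ x ∈ L i, ((lam F : C(X, G)) x = ((F.1 i : C(X, G)) x))) ∧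
      (∀ F, ∀ x ∉ ⋃ i, L i, (lam F : C(X, G)) x = 1) ∧
      Function.Bijective lam ∧
      (∀ F F' : SmallBox (fun i => suppIn X G (L i)),
        ((lam (F * F') : C(X, G))) = (lam F : C(X, G)) * (lam F' : C(X, G))) :=
  stmt17_general L hcpt hdisc
end
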